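/- With T, P, Q as in the norm-independent Sign-ALSH scheme, ‖P(Q(T(q)))‖ = \sqrt{m/4 + ‖T(q)‖^{2^{m+1}}} and ‖Q(P(T(x)))‖ = \sqrt{m/4 + ‖T(x)‖^{2^{m+1}}}. -/

import Mathlib

open Real RealInnerProductSpace

/-- Sign-ALSH preprocessing transformation (generic dimension): append the `m`
scalars `1/2 - ‖v‖^(2^i)`, `i = 1, …, m`. -/
noncomputable def signALSH_P (m : ℕ) {n : ℕ} (v : EuclideanSpace ℝ (Fin n)) :
    EuclideanSpace ℝ (Fin (n + m)) :=
  WithLp.toLp 2 fun j => if h : (j : ℕ) < n then v ⟨j, h⟩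
    else 1 / 2 - ‖v‖ ^ (2 ^ ((j : ℕ) - n + 1))

/-- Sign-ALSH query transformation (generic dimension): append `m` zeros. -/
noncomputable def signALSH_Q (m : ℕ) {n : ℕ} (v : EuclideanSpace ℝ (Fin n)) :
    EuclideanSpace ℝ (Fin (n + m)) :=
  WithLp.toLp 2 fun j => if h : (j : ℕ) < n then v ⟨j, h⟩ else 0

/-- Scaling transformation `T(v) = (U/M) v`. -/
noncomputable def signALSH_T (U M : ℝ) {n : ℕ} (v : EuclideanSpace ℝ (Fin n)) :
    EuclideanSpace ℝ (Fin n) := (U / M) • v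

/-!
Each appended coordinate satisfies `(1/2 - a^(2^i))^2 = 1/4 - a^(2^i) + a^(2^(i+1))`, so the
squares of the `m` appended coordinates of `P v` telescope to `m/4 - ‖v‖^2 + ‖v‖^(2^(m+1))`,
and the leading `‖v‖^2` cancels against the squared norm of `v` itself. Appending zeros with `Q`
changes no norm, so the order of `P` and `Q` is irrelevant.
-/

theorem EuclideanSpace.norm_sq_eq_sum_castAdd_add_sum_natAdd {n m : ℕ}
    (w : EuclideanSpace ℝ (Fin (n + m))) :
    ‖w‖ ^ 2 = ∑ j : Fin n, w (Fin.castAdd m j) ^ 2 + ∑ j : Fin m, w (Fin.natAdd n j) ^ 2 := by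
  simp only [EuclideanSpace.norm_sq_eq, Real.norm_eq_abs, sq_abs, Fin.sum_univ_add]

theorem EuclideanSpace.sum_sq_eq_norm_sq {n : ℕ} (v : EuclideanSpace ℝ (Fin n)) :
    ∑ j, v j ^ 2 = ‖v‖ ^ 2 := by
  simp only [EuclideanSpace.norm_sq_eq, Real.norm_eq_abs, sq_abs]

theorem sum_range_sq_half_sub_pow_two_pow {K : Type*} [Field K] [CharZero K] (a : K) (m : ℕ) :
    ∑ i ∈ Finset.range m, (1 / 2 - a ^ 2 ^ (i + 1)) ^ 2 = m / 4 - a ^ 2 + a ^ 2 ^ (m + 1) := by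
  induction m with
  | zero => simp
  | succ k ih =>
    have hsq : (a ^ 2 ^ (k + 1)) ^ 2 = a ^ 2 ^ (k + 2) := by rw [← pow_mul, ← pow_succ]
    rw [Finset.sum_range_succ, ih, ← hsq]
    push_cast
    ring

theorem norm_signALSH_Q (m : ℕ) {n : ℕ} (v : EuclideanSpace ℝ (Fin n)) :
    ‖signALSH_Q m v‖ = ‖v‖ := by
  refine (sq_eq_sq₀ (norm_nonneg _) (norm_nonneg _)).1 ?_
  simp [EuclideanSpace.norm_sq_eq_sum_castAdd_add_sum_natAdd, signALSH_Q,
    EuclideanSpace.sum_sq_eq_norm_sq]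

theorem norm_sq_signALSH_P (m : ℕ) {n : ℕ} (v : EuclideanSpace ℝ (Fin n)) :
    ‖signALSH_P m v‖ ^ 2 = m / 4 + ‖v‖ ^ 2 ^ (m + 1) := by
  have hhead (j : Fin n) : signALSH_P m v (Fin.castAdd m j) = v j := by
    simp [signALSH_P]
  have htail (j : Fin m) :
      signALSH_P m v (Fin.natAdd n j) = 1 / 2 - ‖v‖ ^ 2 ^ ((j : ℕ) + 1) := by
    simp [signALSH_P]
  simp only [EuclideanSpace.norm_sq_eq_sum_castAdd_add_sum_natAdd, hhead, htail,
    EuclideanSpace.sum_sq_eq_norm_sq,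
    Fin.sum_univ_eq_sum_range (fun i => (1 / 2 - ‖v‖ ^ 2 ^ (i + 1)) ^ 2),
    sum_range_sq_half_sub_pow_two_pow]
  ring

theorem norm_signALSH_P (m : ℕ) {n : ℕ} (v : EuclideanSpace ℝ (Fin n)) :
    ‖signALSH_P m v‖ = √(m / 4 + ‖v‖ ^ 2 ^ (m + 1)) := by
  rw [← norm_sq_signALSH_P, Real.sqrt_sq (norm_nonneg _)]

theorem signALSH_norm_independent_norms_general (m D : ℕ)
    (U M : ℝ)
    (q x : EuclideanSpace ℝ (Fin D)) :
    ‖signALSH_P m (signALSH_Q m (signALSH_T U M q))‖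
      = Real.sqrt (m / 4 + ‖signALSH_T U M q‖ ^ (2 ^ (m + 1))) ∧
    ‖signALSH_Q m (signALSH_P m (signALSH_T U M x))‖
      = Real.sqrt (m / 4 + ‖signALSH_T U M x‖ ^ (2 ^ (m + 1))) := by
  rw [norm_signALSH_Q, norm_signALSH_P, norm_signALSH_P, norm_signALSH_Q]
  exact ⟨rfl, rfl⟩

/-- `‖P(Q(T(q)))‖ = √(m/4 + ‖T(q)‖^(2^(m+1)))` and
`‖Q(P(T(x)))‖ = √(m/4 + ‖T(x)‖^(2^(m+1)))`. -/
theorem signALSH_norm_independent_norms (m D : ℕ) (hm : 1 ≤ m)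
    (U M : ℝ) (hU0 : 0 < U) (hU1 : U < 1) (hM : 0 < M)
    (q x : EuclideanSpace ℝ (Fin D)) :
    ‖signALSH_P m (signALSH_Q m (signALSH_T U M q))‖
      = Real.sqrt (m / 4 + ‖signALSH_T U M q‖ ^ (2 ^ (m + 1))) ∧
    ‖signALSH_Q m (signALSH_P m (signALSH_T U M x))‖
      = Real.sqrt (m / 4 + ‖signALSH_T U M x‖ ^ (2 ^ (m + 1))) :=
  signALSH_norm_independent_norms_general m D U M q x
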